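/- Let M be a simple restricted 𝔇̄-module of level ℓ ≠ 0. Then: (i) n_M ∈ ℕ and h_{n_M−1} acts injectively on M₀; (ii) M₀ is nonzero, is stable under the action of the subalgebra 𝔇̄^{(0,−(n_M−1))}, and is invariant under all operators L̄_n with n ∈ ℕ. -/
import Mathlib


open scoped TensorProduct

noncomputable section

/-- A representation of the twisted Heisenberg–Virasoro algebra `𝔇̄` on the complex
vector space `V`: `d m` is the action of `d_m`, `h r` the action of `h_r` (`m, r ∈ ℤ`),
and `c1`, `c2`, `c3` the actions of the central elements `c̄₁, c̄₂, c̄₃`.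
The axioms say precisely that these data define a Lie algebra homomorphism
`𝔇̄ → End(V)`, i.e. a `𝔇̄`-module structure on `V`. -/
structure BarHV (V : Type) [AddCommGroup V] [Module ℂ V] : Type where
  d : ℤ → Module.End ℂ V
  h : ℤ → Module.End ℂ V
  c1 : Module.End ℂ V
  c2 : Module.End ℂ V
  c3 : Module.End ℂ V
  dd : ∀ m n : ℤ, ⁅d m, d n⁆ = ((m : ℂ) - (n : ℂ)) • d (m + n) +
      (if m + n = 0 then ((m : ℂ) ^ 3 - (m : ℂ)) / 12 else 0) • c1
  dh : ∀ m r : ℤ, ⁅d m, h r⁆ = (-(r : ℂ)) • h (m + r) +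
      (if m + r = 0 then (m : ℂ) ^ 2 + (m : ℂ) else 0) • c2
  hh : ∀ r s : ℤ, ⁅h r, h s⁆ = (if r + s = 0 then (r : ℂ) else 0) • c3
  c1_d : ∀ m : ℤ, ⁅c1, d m⁆ = 0
  c1_h : ∀ r : ℤ, ⁅c1, h r⁆ = 0
  c2_d : ∀ m : ℤ, ⁅c2, d m⁆ = 0
  c2_h : ∀ r : ℤ, ⁅c2, h r⁆ = 0
  c3_d : ∀ m : ℤ, ⁅c3, d m⁆ = 0
  c3_h : ∀ r : ℤ, ⁅c3, h r⁆ = 0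
  c1_c2 : ⁅c1, c2⁆ = 0
  c1_c3 : ⁅c1, c3⁆ = 0
  c2_c3 : ⁅c2, c3⁆ = 0

namespace BarHV

variable {V : Type} [AddCommGroup V] [Module ℂ V]

/-- A `𝔇̄`-submodule. -/
def Invariant (ρ : BarHV V) (W : Submodule ℂ V) : Prop :=
  (∀ m : ℤ, ∀ w ∈ W, ρ.d m w ∈ W) ∧ (∀ r : ℤ, ∀ w ∈ W, ρ.h r w ∈ W) ∧
    (∀ w ∈ W, ρ.c1 w ∈ W) ∧ (∀ w ∈ W, ρ.c2 w ∈ W) ∧ (∀ w ∈ W, ρ.c3 w ∈ W)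

/-- Simplicity of a `𝔇̄`-module. -/
def IsSimple (ρ : BarHV V) : Prop :=
  Nontrivial V ∧ ∀ W : Submodule ℂ V, ρ.Invariant W → W = ⊥ ∨ W = ⊤

/-- A restricted `𝔇̄`-module: every vector is killed by `d_i` and `h_i` for all
sufficiently large `i`. -/
def Restricted (ρ : BarHV V) : Prop :=
  ∀ v : V, ∃ N : ℕ, ∀ i : ℤ, (N : ℤ) < i → ρ.d i v = 0 ∧ ρ.h i v = 0

/-- The central element `c̄₃` acts as the scalar `ℓ` (the level). -/
def Level (ρ : BarHV V) (ℓ : ℂ) : Prop := ρ.c3 = ℓ • (1 : Module.End ℂ V)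

/-- The central element `c̄₁` acts as the scalar `c` (the central charge). -/
def CentralCharge (ρ : BarHV V) (c : ℂ) : Prop := ρ.c1 = c • (1 : Module.End ℂ V)

end BarHV

/-- A representation of the (untwisted) Heisenberg algebra `𝔥̄` (basis `h_r`, `r ∈ ℤ`,
and the central element `c̄₃`). -/
structure BarHeis (H : Type) [AddCommGroup H] [Module ℂ H] : Type where
  h : ℤ → Module.End ℂ H
  c3 : Module.End ℂ H
  hh : ∀ r s : ℤ, ⁅h r, h s⁆ = (if r + s = 0 then (r : ℂ) else 0) • c3
  c3_h : ∀ r : ℤ, ⁅c3, h r⁆ = 0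

namespace BarHeis

variable {H : Type} [AddCommGroup H] [Module ℂ H]

/-- An `𝔥̄`-submodule. -/
def Invariant (τ : BarHeis H) (W : Submodule ℂ H) : Prop :=
  (∀ r : ℤ, ∀ w ∈ W, τ.h r w ∈ W) ∧ ∀ w ∈ W, τ.c3 w ∈ W

/-- Simplicity of an `𝔥̄`-module. -/
def IsSimple (τ : BarHeis H) : Prop :=
  Nontrivial H ∧ ∀ W : Submodule ℂ H, τ.Invariant W → W = ⊥ ∨ W = ⊤

/-- A restricted `𝔥̄`-module. -/
def Restricted (τ : BarHeis H) : Prop :=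
  ∀ v : H, ∃ N : ℤ, ∀ r : ℤ, N < r → τ.h r v = 0

/-- The central element `c̄₃` acts as the scalar `ℓ`. -/
def Level (τ : BarHeis H) (ℓ : ℂ) : Prop := τ.c3 = ℓ • (1 : Module.End ℂ H)

/-- `L` is the family of operators
`L̄_n = (1/(2ℓ)) ∑_{k ∈ ℤ} :h_{n-k} h_k: + ((n+1)z/ℓ) h_n`
(normal ordering `:h_r h_s: = h_r h_s` if `r ≤ s`, else `h_s h_r`) of the restricted
`𝔥̄`-representation `τ` of level `ℓ` with parameter `z`:  `L n v` is characterized as the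
(finite) truncation of the above sum at any cutoff `N` valid for `v`; all omitted terms
annihilate `v`. -/
def Sugawara (τ : BarHeis H) (ℓ z : ℂ) (L : ℤ → Module.End ℂ H) : Prop :=
  ∀ (n : ℤ) (v : H) (N : ℤ), (∀ r : ℤ, N < r → τ.h r v = 0) →
    L n v =
      (2 * ℓ)⁻¹ • (∑ k ∈ Finset.Icc (n - N) N,
          if n - k ≤ k then τ.h (n - k) (τ.h k v) else τ.h k (τ.h (n - k) v)) +
        (((n : ℂ) + 1) * z / ℓ) • τ.h n v

end BarHeis

/-- A representation of the Virasoro algebra `Vir` (basis `d_m`, `m ∈ ℤ`, and the central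
element `c̄₁`). -/
structure Vira (U : Type) [AddCommGroup U] [Module ℂ U] : Type where
  d : ℤ → Module.End ℂ U
  c1 : Module.End ℂ U
  dd : ∀ m n : ℤ, ⁅d m, d n⁆ = ((m : ℂ) - (n : ℂ)) • d (m + n) +
      (if m + n = 0 then ((m : ℂ) ^ 3 - (m : ℂ)) / 12 else 0) • c1
  c1_d : ∀ m : ℤ, ⁅c1, d m⁆ = 0

namespace Vira

variable {U : Type} [AddCommGroup U] [Module ℂ U]

/-- A `Vir`-submodule. -/
def Invariant (υ : Vira U) (W : Submodule ℂ U) : Prop :=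
  (∀ m : ℤ, ∀ w ∈ W, υ.d m w ∈ W) ∧ ∀ w ∈ W, υ.c1 w ∈ W

/-- Simplicity of a `Vir`-module. -/
def IsSimple (υ : Vira U) : Prop :=
  Nontrivial U ∧ ∀ W : Submodule ℂ U, υ.Invariant W → W = ⊥ ∨ W = ⊤

/-- A restricted `Vir`-module. -/
def Restricted (υ : Vira U) : Prop :=
  ∀ v : U, ∃ N : ℤ, ∀ i : ℤ, N < i → υ.d i v = 0

end Vira

variable {V : Type} [AddCommGroup V] [Module ℂ V]

/-- The restriction of a `𝔇̄`-representation to the Heisenberg subalgebra `𝔥̄`. -/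
def BarHV.toBarHeis (ρ : BarHV V) : BarHeis V := ⟨ρ.h, ρ.c3, ρ.hh, ρ.c3_h⟩

/-- A representation of the subalgebra `𝔇̄^{(0,t)}` of `𝔇̄`, spanned by the `d_j`
(`j ≥ 0`), the `h_i` (`i ≥ t`) and `c̄₁, c̄₂, c̄₃`.  The values of the fields `d`, `h`
below the cutoffs are irrelevant: no condition ever refers to them. -/
structure BarSub (t : ℤ) (V : Type) [AddCommGroup V] [Module ℂ V] : Type where
  d : ℤ → Module.End ℂ V
  h : ℤ → Module.End ℂ V
  c1 : Module.End ℂ V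
  c2 : Module.End ℂ V
  c3 : Module.End ℂ V
  dd : ∀ m n : ℤ, 0 ≤ m → 0 ≤ n → ⁅d m, d n⁆ = ((m : ℂ) - (n : ℂ)) • d (m + n) +
      (if m + n = 0 then ((m : ℂ) ^ 3 - (m : ℂ)) / 12 else 0) • c1
  dh : ∀ m r : ℤ, 0 ≤ m → t ≤ r → ⁅d m, h r⁆ = (-(r : ℂ)) • h (m + r) +
      (if m + r = 0 then (m : ℂ) ^ 2 + (m : ℂ) else 0) • c2
  hh : ∀ r s : ℤ, t ≤ r → t ≤ s → ⁅h r, h s⁆ = (if r + s = 0 then (r : ℂ) else 0) • c3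
  c1_d : ∀ m : ℤ, 0 ≤ m → ⁅c1, d m⁆ = 0
  c1_h : ∀ r : ℤ, t ≤ r → ⁅c1, h r⁆ = 0
  c2_d : ∀ m : ℤ, 0 ≤ m → ⁅c2, d m⁆ = 0
  c2_h : ∀ r : ℤ, t ≤ r → ⁅c2, h r⁆ = 0
  c3_d : ∀ m : ℤ, 0 ≤ m → ⁅c3, d m⁆ = 0
  c3_h : ∀ r : ℤ, t ≤ r → ⁅c3, h r⁆ = 0
  c1_c2 : ⁅c1, c2⁆ = 0
  c1_c3 : ⁅c1, c3⁆ = 0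
  c2_c3 : ⁅c2, c3⁆ = 0

namespace BarSub

variable {t : ℤ} {V : Type} [AddCommGroup V] [Module ℂ V]

/-- A `𝔇̄^{(0,t)}`-submodule. -/
def Invariant (τ : BarSub t V) (W : Submodule ℂ V) : Prop :=
  (∀ m : ℤ, 0 ≤ m → ∀ w ∈ W, τ.d m w ∈ W) ∧ (∀ r : ℤ, t ≤ r → ∀ w ∈ W, τ.h r w ∈ W) ∧
    (∀ w ∈ W, τ.c1 w ∈ W) ∧ (∀ w ∈ W, τ.c2 w ∈ W) ∧ (∀ w ∈ W, τ.c3 w ∈ W)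

/-- Simplicity of a `𝔇̄^{(0,t)}`-module. -/
def IsSimple (τ : BarSub t V) : Prop :=
  Nontrivial V ∧ ∀ W : Submodule ℂ V, τ.Invariant W → W = ⊥ ∨ W = ⊤

/-- `f` is a homomorphism of `𝔇̄^{(0,t)}`-modules. -/
def Map (τ : BarSub t V) {W : Type} [AddCommGroup W] [Module ℂ W] (σ : BarSub t W)
    (f : V →ₗ[ℂ] W) : Prop :=
  (∀ m : ℤ, 0 ≤ m → ∀ v : V, f (τ.d m v) = σ.d m (f v)) ∧
    (∀ r : ℤ, t ≤ r → ∀ v : V, f (τ.h r v) = σ.h r (f v)) ∧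
    (∀ v : V, f (τ.c1 v) = σ.c1 (f v)) ∧ (∀ v : V, f (τ.c2 v) = σ.c2 (f v)) ∧
    (∀ v : V, f (τ.c3 v) = σ.c3 (f v))

end BarSub

/-- The restriction of a `𝔇̄`-representation to the subalgebra `𝔇̄^{(0,t)}`. -/
def BarHV.toBarSub (ρ : BarHV V) (t : ℤ) : BarSub t V where
  d := ρ.d
  h := ρ.h
  c1 := ρ.c1
  c2 := ρ.c2
  c3 := ρ.c3
  dd := fun m n _ _ => ρ.dd m n
  dh := fun m r _ _ => ρ.dh m r
  hh := fun r s _ _ => ρ.hh r s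
  c1_d := fun m _ => ρ.c1_d m
  c1_h := fun r _ => ρ.c1_h r
  c2_d := fun m _ => ρ.c2_d m
  c2_h := fun r _ => ρ.c2_h r
  c3_d := fun m _ => ρ.c3_d m
  c3_h := fun r _ => ρ.c3_h r
  c1_c2 := ρ.c1_c2
  c1_c3 := ρ.c1_c3
  c2_c3 := ρ.c2_c3

/-- `F` is a homomorphism of `𝔇̄`-modules. -/
def BarHV.Map (ρ : BarHV V) {W : Type} [AddCommGroup W] [Module ℂ W]
    (σ : BarHV W) (F : V →ₗ[ℂ] W) : Prop :=
  (∀ m : ℤ, ∀ v : V, F (ρ.d m v) = σ.d m (F v)) ∧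
    (∀ r : ℤ, ∀ v : V, F (ρ.h r v) = σ.h r (F v)) ∧
    (∀ v : V, F (ρ.c1 v) = σ.c1 (F v)) ∧ (∀ v : V, F (ρ.c2 v) = σ.c2 (F v)) ∧
    (∀ v : V, F (ρ.c3 v) = σ.c3 (F v))

/-- `(M, ρ, ι)` realizes the induced `𝔇̄`-module `Ind^𝔇̄_{𝔇̄^{(0,t)}} V` of the
`𝔇̄^{(0,t)}`-module `(V, τ)`: the universal property characterizing
`U(𝔇̄) ⊗_{U(𝔇̄^{(0,t)})} V` with its canonical map `ι`. -/
def IsInducedBar (t : ℤ) {V : Type} [AddCommGroup V] [Module ℂ V] (τ : BarSub t V)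
    {M : Type} [AddCommGroup M] [Module ℂ M] (ρ : BarHV M) (ι : V →ₗ[ℂ] M) : Prop :=
  τ.Map (ρ.toBarSub t) ι ∧
    ∀ (W : Type) (_ : AddCommGroup W) (_ : Module ℂ W) (σ : BarHV W) (f : V →ₗ[ℂ] W),
      τ.Map (σ.toBarSub t) f → ∃! F : M →ₗ[ℂ] W, ρ.Map σ F ∧ F.comp ι = f

/-- `σ` is the `𝔇̄^{(0,t)}`-module structure on the subspace `W` of `V` obtained by
restricting the `𝔇̄`-action `ρ`. -/
def BarSub.IsRestrictionOf {t : ℤ} {V : Type} [AddCommGroup V] [Module ℂ V]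
    {W : Submodule ℂ V} (σ : BarSub t ↥W) (ρ : BarHV V) : Prop :=
  (∀ m : ℤ, 0 ≤ m → ∀ w : ↥W, (σ.d m w : V) = ρ.d m (w : V)) ∧
    (∀ r : ℤ, t ≤ r → ∀ w : ↥W, (σ.h r w : V) = ρ.h r (w : V)) ∧
    (∀ w : ↥W, (σ.c1 w : V) = ρ.c1 (w : V)) ∧ (∀ w : ↥W, (σ.c2 w : V) = ρ.c2 (w : V)) ∧
    (∀ w : ↥W, (σ.c3 w : V) = ρ.c3 (w : V))

/-- The subspace `W` of the `𝔇̄`-module `(V, ρ)` is a simple `𝔇̄^{(0,t)}`-module under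
the restricted action, and `V` is isomorphic to the induced module
`Ind^𝔇̄_{𝔇̄^{(0,t)}} W`. -/
def InducedFromSubBar (t : ℤ) {V : Type} [AddCommGroup V] [Module ℂ V]
    (ρ : BarHV V) (W : Submodule ℂ V) : Prop :=
  ∃ σ : BarSub t ↥W, σ.IsRestrictionOf ρ ∧ σ.IsSimple ∧
    ∃ ι : ↥W →ₗ[ℂ] V, IsInducedBar t σ ρ ι

/-- `(V, ρ) ≅ K(z)^𝔇̄ ⊗ U^𝔇̄` as `𝔇̄`-modules, where the Heisenberg module `(K, τ)` of
level `ℓ` carries the `𝔇̄`-action through the operators `L = L̄` (with `c̄₂` acting as `z`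
and `c̄₁` as `1 - 12z²/ℓ`), and the Virasoro module `(U, υ)` carries the `𝔇̄`-action with
`𝔥̄` and `c̄₂` acting by zero. -/
def IsTensorOfBar {S : Type} [AddCommGroup S] [Module ℂ S] {K : Type} [AddCommGroup K]
    [Module ℂ K] {U : Type} [AddCommGroup U] [Module ℂ U] (ρ : BarHV S) (τ : BarHeis K)
    (L : ℤ → Module.End ℂ K) (z ℓ : ℂ) (υ : Vira U) : Prop :=
  ∃ e : K ⊗[ℂ] U ≃ₗ[ℂ] S,
    (∀ (m : ℤ) (a : K) (b : U),
      ρ.d m (e (a ⊗ₜ[ℂ] b)) = e ((L m a) ⊗ₜ[ℂ] b + a ⊗ₜ[ℂ] (υ.d m b))) ∧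
    (∀ (r : ℤ) (a : K) (b : U), ρ.h r (e (a ⊗ₜ[ℂ] b)) = e ((τ.h r a) ⊗ₜ[ℂ] b)) ∧
    (∀ (a : K) (b : U),
      ρ.c1 (e (a ⊗ₜ[ℂ] b)) = e ((1 - 12 * z ^ 2 / ℓ) • (a ⊗ₜ[ℂ] b) + a ⊗ₜ[ℂ] (υ.c1 b))) ∧
    (∀ (a : K) (b : U), ρ.c2 (e (a ⊗ₜ[ℂ] b)) = e (z • (a ⊗ₜ[ℂ] b))) ∧
    (∀ (a : K) (b : U), ρ.c3 (e (a ⊗ₜ[ℂ] b)) = e ((τ.c3 a) ⊗ₜ[ℂ] b))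

/-- `(V, ρ) ≅ K(z)^𝔇̄` as `𝔇̄`-modules. -/
def IsBarHeisOf {S : Type} [AddCommGroup S] [Module ℂ S] {K : Type} [AddCommGroup K]
    [Module ℂ K] (ρ : BarHV S) (τ : BarHeis K) (L : ℤ → Module.End ℂ K)
    (z ℓ : ℂ) : Prop :=
  ∃ e : K ≃ₗ[ℂ] S,
    (∀ (m : ℤ) (a : K), ρ.d m (e a) = e (L m a)) ∧
    (∀ (r : ℤ) (a : K), ρ.h r (e a) = e (τ.h r a)) ∧
    (∀ a : K, ρ.c1 (e a) = (1 - 12 * z ^ 2 / ℓ) • e a) ∧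
    (∀ a : K, ρ.c2 (e a) = z • e a) ∧ (∀ a : K, ρ.c3 (e a) = e (τ.c3 a))

/-- `M(r) = Ann_M(𝔥̄^{(r)}) = {v | h_{r+i}·v = 0 for all i ∈ ℕ}`. -/
def annHBar (ρ : BarHV V) (r : ℤ) : Submodule ℂ V where
  carrier := {v : V | ∀ i : ℤ, r ≤ i → ρ.h i v = 0}
  add_mem' := by
    intro a b ha hb
    simp only [Set.mem_setOf_eq] at *
    intro i hi
    rw [map_add, ha i hi, hb i hi, add_zero]
  zero_mem' := by
    simp only [Set.mem_setOf_eq]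
    intro i _
    exact map_zero _
  smul_mem' := by
    intro c v hv
    simp only [Set.mem_setOf_eq] at *
    intro i hi
    rw [map_smul, hv i hi, smul_zero]

/-- `{v | d'_p·v = (d_p - L̄_p)·v = 0 for all p ≥ r}`. -/
def annD'Bar (ρ : BarHV V) (L : ℤ → Module.End ℂ V) (r : ℤ) : Submodule ℂ V where
  carrier := {v : V | ∀ p : ℤ, r ≤ p → (ρ.d p - L p) v = 0}
  add_mem' := by
    intro a b ha hb
    simp only [Set.mem_setOf_eq] at *
    intro p hp
    rw [map_add, ha p hp, hb p hp, add_zero]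
  zero_mem' := by
    simp only [Set.mem_setOf_eq]
    intro p _
    exact map_zero _
  smul_mem' := by
    intro c v hv
    simp only [Set.mem_setOf_eq] at *
    intro p hp
    rw [map_smul, hv p hp, smul_zero]

/-- `Y_n = {v ∈ M₀ : d'_p·v = 0 for all p ≥ n}`. -/
def YsubBar (ρ : BarHV V) (L : ℤ → Module.End ℂ V) (nM n : ℤ) : Submodule ℂ V :=
  annHBar ρ nM ⊓ annD'Bar ρ L n

/-- The `𝔥̄`-submodule `U(𝔥̄)·W` of `V` generated by the subspace `W`. -/
def barHeisSpan (ρ : BarHV V) (W : Submodule ℂ V) : Submodule ℂ V :=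
  sInf {X : Submodule ℂ V | W ≤ X ∧ (∀ r : ℤ, ∀ x ∈ X, ρ.h r x ∈ X) ∧ ∀ x ∈ X, ρ.c3 x ∈ X}

/-- The subspace `K` of `V` is a simple `𝔥̄`-submodule of the `𝔇̄`-module `(V, ρ)`. -/
def barHeisSimpleSub (ρ : BarHV V) (K : Submodule ℂ V) : Prop :=
  K ≠ ⊥ ∧ (∀ r : ℤ, ∀ x ∈ K, ρ.h r x ∈ K) ∧ (∀ x ∈ K, ρ.c3 x ∈ K) ∧
    ∀ W : Submodule ℂ V, W ≤ K → (∀ r : ℤ, ∀ x ∈ W, ρ.h r x ∈ W) →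
      (∀ x ∈ W, ρ.c3 x ∈ W) → W = ⊥ ∨ W = K

end

/-- Lemma 5.1.  Let `M` be a simple restricted `𝔇̄`-module of level
`ℓ ≠ 0`, with `z` the scalar by which `c̄₂` acts, and let `n_M` be the least `r` with
`M(r) = {v | h_{r+i} v = 0 ∀ i ∈ ℕ} ≠ 0`, `M₀ = M(n_M)`.  Then: (i) `n_M ∈ ℕ` and
`h_{n_M-1}` acts injectively on `M₀`; (ii) `M₀` is nonzero, stable under the subalgebra
`𝔇̄^{(0,-(n_M-1))}` (spanned by the `d_j`, `j ≥ 0`, the `h_i`, `i ≥ 1 - n_M`, and the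
central elements), and invariant under all operators `L̄_n`, `n ∈ ℕ`. -/
theorem statement_13 (V : Type) [AddCommGroup V] [Module ℂ V]
    (ρ : BarHV V) (ℓ z : ℂ) (hℓ : ℓ ≠ 0)
    (hsimple : ρ.IsSimple) (hres : ρ.Restricted) (hlevel : ρ.Level ℓ)
    (hz : ρ.c2 = z • (1 : Module.End ℂ V))
    (nM : ℤ) (hnM₁ : annHBar ρ nM ≠ ⊥) (hnM₂ : ∀ r : ℤ, r < nM → annHBar ρ r = ⊥) :
    -- (i)
    (0 ≤ nM ∧ ∀ v ∈ annHBar ρ nM, ρ.h (nM - 1) v = 0 → v = 0) ∧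
    -- (ii)
    (annHBar ρ nM ≠ ⊥ ∧
      (∀ m : ℤ, 0 ≤ m → ∀ v ∈ annHBar ρ nM, ρ.d m v ∈ annHBar ρ nM) ∧
      (∀ i : ℤ, 1 - nM ≤ i → ∀ v ∈ annHBar ρ nM, ρ.h i v ∈ annHBar ρ nM) ∧
      (∀ v ∈ annHBar ρ nM, ρ.c1 v ∈ annHBar ρ nM) ∧
      (∀ v ∈ annHBar ρ nM, ρ.c2 v ∈ annHBar ρ nM) ∧
      (∀ v ∈ annHBar ρ nM, ρ.c3 v ∈ annHBar ρ nM) ∧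
      (∀ L : ℤ → Module.End ℂ V, ρ.toBarHeis.Sugawara ℓ z L →
        ∀ n : ℤ, 0 ≤ n → ∀ v ∈ annHBar ρ nM, L n v ∈ annHBar ρ nM)) := by
  have mem_ann : ∀ (r : ℤ) (v : V), v ∈ annHBar ρ r ↔ ∀ i : ℤ, r ≤ i → ρ.h i v = 0 :=
    fun r v => Iff.rfl
  -- commutator of h's on vectors
  have hcomm : ∀ (a b : ℤ) (v : V), ρ.h a (ρ.h b v) =
      ρ.h b (ρ.h a v) + (if a + b = 0 then (a : ℂ) else 0) • ℓ • v := by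
    intro a b v
    have h1 := ρ.hh a b
    rw [hlevel] at h1
    have h2 := congrArg (fun f : Module.End ℂ V => f v) h1
    simp only [Ring.lie_def, LinearMap.sub_apply, Module.End.mul_apply,
      LinearMap.smul_apply, Module.End.one_apply] at h2
    rw [sub_eq_iff_eq_add'] at h2
    simpa using h2
  -- nM is nonnegative
  obtain ⟨v₀, hv₀mem, hv₀ne⟩ := Submodule.exists_mem_ne_zero_of_ne_bot hnM₁
  have hnonneg : (0 : ℤ) ≤ nM := by
    by_contra hc
    push_neg at hc
    have h1 : ρ.h (-nM) v₀ = 0 := (mem_ann nM v₀).mp hv₀mem (-nM) (by omega)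
    have h2 : ρ.h nM v₀ = 0 := (mem_ann nM v₀).mp hv₀mem nM le_rfl
    have h3 := hcomm nM (-nM) v₀
    rw [h1, h2, map_zero, map_zero, if_pos (by ring)] at h3
    have h4 : (nM : ℂ) • ℓ • v₀ = 0 := by simpa using h3.symm
    have h5 : (nM : ℂ) ≠ 0 := by
      simp only [ne_eq, Int.cast_eq_zero]; omega
    rw [smul_eq_zero] at h4
    rcases h4 with h4 | h4
    · exact h5 h4
    · rw [smul_eq_zero] at h4
      rcases h4 with h4 | h4
      · exact hℓ h4
      · exact hv₀ne h4
  -- injectivity of h (nM - 1) on M₀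
  have hinj : ∀ v ∈ annHBar ρ nM, ρ.h (nM - 1) v = 0 → v = 0 := by
    intro v hv hkill
    have hmem : v ∈ annHBar ρ (nM - 1) := by
      rw [mem_ann]
      intro i hi
      rcases eq_or_lt_of_le hi with h | h
      · rw [← h]; exact hkill
      · exact (mem_ann nM v).mp hv i (by omega)
    have := hnM₂ (nM - 1) (by omega)
    rw [this, Submodule.mem_bot] at hmem
    exact hmem
  -- swap lemma for h's with indices of appropriate sizes
  have hswap : ∀ (j a : ℤ), nM ≤ j → 1 - nM ≤ a → ∀ w : V,
      ρ.h j (ρ.h a w) = ρ.h a (ρ.h j w) := by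
    intro j a hj ha w
    rw [hcomm j a w, if_neg (by omega), zero_smul, add_zero]
  -- h-stability
  have hHstab : ∀ i : ℤ, 1 - nM ≤ i → ∀ v ∈ annHBar ρ nM, ρ.h i v ∈ annHBar ρ nM := by
    intro i hi v hv
    rw [mem_ann]
    intro r hr
    rw [hswap r i hr hi v, (mem_ann nM v).mp hv r hr, map_zero]
  -- d-stability
  have hDstab : ∀ m : ℤ, 0 ≤ m → ∀ v ∈ annHBar ρ nM, ρ.d m v ∈ annHBar ρ nM := by
    intro m hm v hv
    rw [mem_ann]
    intro i hi
    have h1 := ρ.dh m i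
    rw [hz] at h1
    have h2 := congrArg (fun f : Module.End ℂ V => f v) h1
    simp only [Ring.lie_def, LinearMap.sub_apply, Module.End.mul_apply,
      LinearMap.smul_apply, Module.End.one_apply, LinearMap.add_apply] at h2
    have hiv : ρ.h i v = 0 := (mem_ann nM v).mp hv i hi
    have hmi : ρ.h (m + i) v = 0 := (mem_ann nM v).mp hv (m + i) (by omega)
    rw [hiv, map_zero, hmi, smul_zero, zero_sub, zero_add] at h2
    have hdelta : (if m + i = 0 then (m : ℂ) ^ 2 + (m : ℂ) else 0) = 0 := by
      by_cases hc : m + i = 0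
      · have : m = 0 := by omega
        rw [if_pos hc, this]; norm_num
      · rw [if_neg hc]
    rw [hdelta, zero_smul] at h2
    exact neg_eq_zero.mp h2
  refine ⟨⟨hnonneg, hinj⟩, hnM₁, hDstab, hHstab, ?_, ?_, ?_, ?_⟩
  · -- c1-stability
    intro v hv
    rw [mem_ann]
    intro i hi
    have h1 := congrArg (fun f : Module.End ℂ V => f v) (ρ.c1_h i)
    simp only [Ring.lie_def, LinearMap.sub_apply, Module.End.mul_apply,
      LinearMap.zero_apply] at h1
    rw [sub_eq_zero] at h1
    rw [← h1, (mem_ann nM v).mp hv i hi, map_zero]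
  · -- c2-stability
    intro v hv
    rw [mem_ann]
    intro i hi
    rw [hz]
    simp only [LinearMap.smul_apply, Module.End.one_apply, map_smul]
    rw [(mem_ann nM v).mp hv i hi, smul_zero]
  · -- c3-stability
    intro v hv
    rw [mem_ann]
    intro i hi
    rw [hlevel]
    simp only [LinearMap.smul_apply, Module.End.one_apply, map_smul]
    rw [(mem_ann nM v).mp hv i hi, smul_zero]
  · -- Sugawara invariance
    intro L hL n hn v hv
    have hcut : ∀ r : ℤ, nM - 1 < r → ρ.toBarHeis.h r v = 0 := by
      intro r hr
      exact (mem_ann nM v).mp hv r (by omega)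
    have hLv := hL n v (nM - 1) hcut
    rw [mem_ann]
    intro j hj
    rw [hLv, map_add, map_smul, map_smul, map_sum]
    have hhn : ρ.h j (ρ.toBarHeis.h n v) = 0 := by
      show ρ.h j (ρ.h n v) = 0
      rw [hcomm j n v, (mem_ann nM v).mp hv j hj, map_zero, zero_add]
      by_cases hc : j + n = 0
      · have : j = 0 := by omega
        rw [if_pos hc, this]; simp
      · rw [if_neg hc, zero_smul]
    have hsum : ∀ k ∈ Finset.Icc (n - (nM - 1)) (nM - 1),
        ρ.h j ((if n - k ≤ k then ρ.toBarHeis.h (n - k) (ρ.toBarHeis.h k v)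
          else ρ.toBarHeis.h k (ρ.toBarHeis.h (n - k) v)) : V) = 0 := by
      intro k hk
      rw [Finset.mem_Icc] at hk
      have hk1 : 1 - nM ≤ k := by omega
      have hk2 : 1 - nM ≤ n - k := by omega
      have hjv : ρ.h j v = 0 := (mem_ann nM v).mp hv j hj
      by_cases hc : n - k ≤ k
      · rw [if_pos hc]
        show ρ.h j (ρ.h (n - k) (ρ.h k v)) = 0
        rw [hswap j (n - k) hj hk2, hswap j k hj hk1, hjv, map_zero, map_zero]
      · rw [if_neg hc]
        show ρ.h j (ρ.h k (ρ.h (n - k) v)) = 0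
        rw [hswap j k hj hk1, hswap j (n - k) hj hk2, hjv, map_zero, map_zero]
    rw [Finset.sum_congr rfl hsum, Finset.sum_const_zero, smul_zero, zero_add, hhn,
      smul_zero]
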